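/- arXiv:2604.01267 — 4 statements merged into one kernel-verified Lean document; each statement's English description precedes it below -/
import Mathlib

section
/- Let (X, μ) be a probability space and let s : X → ℝ^d be measurable with each component s_j in L²(μ). If the Fisher information matrix I ∈ ℝ^{d×d} with entries I_{ij} = ∫ s_i(x) s_j(x) dμ(x) is nonsingular, then there exist bounded measurable functions f_1, …, f_d : X → ℝ such that the d×d matrix J with entries J_{ij} = ∫ f_i(x) s_j(x) dμ(x) is invertible. -/
/-!
Truncate the score at level `n`: the functions `truncation (s i) n` are bounded and measurable,
and by dominated convergence (with dominating function `|s i * s j|`, integrable by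
Hölder) the matrices `∫ truncation (s i) n * s j` converge entrywise to the Fisher
information `I`. Invertibility is an open condition, so these matrices are invertible for
large `n`.
-/

open MeasureTheory Filter Topology ProbabilityTheory

section Truncation

variable {α : Type*}

theorem tendsto_truncation (f : α → ℝ) (x : α) :
    Tendsto (fun n : ℕ => truncation f n x) atTop (𝓝 (f x)) :=
  tendsto_const_nhds.congr' <|
    (tendsto_natCast_atTop_atTop.eventually_gt_atTop |f x|).mono fun _ hn =>
      (truncation_eq_self hn).symm

variable [MeasurableSpace α]

theorem measurable_truncation {f : α → ℝ} (hf : Measurable f) (A : ℝ) :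
    Measurable (truncation f A) :=
  (measurable_id.indicator measurableSet_Ioc).comp hf

theorem tendsto_integral_truncation_mul {μ : Measure α} {f g : α → ℝ}
    (hf : AEStronglyMeasurable f μ) (hg : AEStronglyMeasurable g μ)
    (hfg : Integrable (f * g) μ) :
    Tendsto (fun n : ℕ => ∫ x, truncation f n x * g x ∂μ) atTop (𝓝 (∫ x, f x * g x ∂μ)) :=
  tendsto_integral_of_dominated_convergence (fun x => ‖f x * g x‖)
    (fun _ => hf.truncation.mul hg) hfg.norm
    (fun n => ae_of_all _ fun x => by
      simpa only [norm_mul, Real.norm_eq_abs] using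
        mul_le_mul_of_nonneg_right (abs_truncation_le_abs_self f n x) (abs_nonneg (g x)))
    (ae_of_all _ fun x => (tendsto_truncation f x).mul_const (g x))

end Truncation

theorem Filter.Tendsto.eventually_isUnit_matrix {α ι K : Type*} [Fintype ι] [DecidableEq ι]
    [Field K] [TopologicalSpace K] [IsTopologicalRing K] [T1Space K] {l : Filter α}
    {M : α → Matrix ι ι K} {A : Matrix ι ι K} (h : Tendsto M l (𝓝 A)) (hA : IsUnit A) :
    ∀ᶠ n in l, IsUnit (M n) := by
  have hdet : Tendsto (fun n => (M n).det) l (𝓝 A.det) :=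
    (continuous_id.matrix_det.tendsto A).comp h
  filter_upwards [hdet.eventually_ne ((Matrix.isUnit_iff_isUnit_det A).mp hA).ne_zero] with n hn
  exact (Matrix.isUnit_iff_isUnit_det _).mpr hn.isUnit

theorem exists_observable_chart_of_fisher_nonsingular_general {X : Type*} [MeasurableSpace X]
    (μ : Measure X) {d : ℕ} (s : Fin d → X → ℝ)
    (hs_meas : ∀ j, Measurable (s j)) (hs_L2 : ∀ j, MemLp (s j) 2 μ)
    (I : Matrix (Fin d) (Fin d) ℝ)
    (hI : ∀ i j, I i j = ∫ x, s i x * s j x ∂μ)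
    (hI_inv : IsUnit I) :
    ∃ f : Fin d → X → ℝ,
      (∀ i, Measurable (f i)) ∧
      (∀ i, ∃ C : ℝ, ∀ x, |f i x| ≤ C) ∧
      IsUnit (Matrix.of fun i j => ∫ x, f i x * s j x ∂μ : Matrix (Fin d) (Fin d) ℝ) := by
  have hconv : Tendsto (fun n : ℕ => (Matrix.of fun i j => ∫ x, truncation (s i) n x * s j x ∂μ :
      Matrix (Fin d) (Fin d) ℝ)) atTop (𝓝 I) := by
    refine tendsto_pi_nhds.mpr fun i => tendsto_pi_nhds.mpr fun j => ?_
    rw [hI i j]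
    exact tendsto_integral_truncation_mul (hs_meas i).aestronglyMeasurable
      (hs_meas j).aestronglyMeasurable ((hs_L2 i).integrable_mul (hs_L2 j))
  obtain ⟨n, hn⟩ := (hconv.eventually_isUnit_matrix hI_inv).exists
  exact ⟨fun i => truncation (s i) n, fun i => measurable_truncation (hs_meas i) n,
    fun i => ⟨|(n : ℝ)|, abs_truncation_le_bound (s i) n⟩, hn⟩

/-- At a regular point (nonsingular Fisher information), there exist finitely many
bounded measurable observables whose Jacobian `J_{ij} = ∫ f_i s_j dμ` is invertible. -/
theorem exists_observable_chart_of_fisher_nonsingular {X : Type*} [MeasurableSpace X]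
    (μ : Measure X) [IsProbabilityMeasure μ] {d : ℕ} (s : Fin d → X → ℝ)
    (hs_meas : ∀ j, Measurable (s j)) (hs_L2 : ∀ j, MemLp (s j) 2 μ)
    (I : Matrix (Fin d) (Fin d) ℝ)
    (hI : ∀ i j, I i j = ∫ x, s i x * s j x ∂μ)
    (hI_inv : IsUnit I) :
    ∃ f : Fin d → X → ℝ,
      (∀ i, Measurable (f i)) ∧
      (∀ i, ∃ C : ℝ, ∀ x, |f i x| ≤ C) ∧
      IsUnit (Matrix.of fun i j => ∫ x, f i x * s j x ∂μ : Matrix (Fin d) (Fin d) ℝ) :=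
  exists_observable_chart_of_fisher_nonsingular_general μ s hs_meas hs_L2 I hI hI_inv
end

section
/- Let H be a real Hilbert space, let g_1, …, g_d ∈ H be linearly independent, and let S ⊆ H be a subset whose linear span is dense in H. Then there exist f_1, …, f_d ∈ S such that the d×d matrix with entries ⟨f_i, g_j⟩ is invertible. -/
/-!
The map `Φ x = (⟪g j, x⟫)ⱼ` from `H` to `ℝᵈ` is onto, since `Φ (∑ cₖ gₖ)` is the Gram matrix
of `g` applied to `c`. Being continuous, `Φ` maps the dense subspace `span S` onto a dense,
hence (by finite dimensionality) full, subspace of `ℝᵈ`; so `Φ '' S` contains a basis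
`Φ f₁, …, Φ f_d`, and these are exactly the rows of the matrix `(⟪fᵢ, gⱼ⟫)`.
-/

open Function Module Submodule
open scoped ComplexOrder

theorem pi_innerSL_sum_smul_eq_gram_mulVec {𝕜 E ι : Type*} [RCLike 𝕜] [NormedAddCommGroup E]
    [InnerProductSpace 𝕜 E] [Fintype ι] (g : ι → E) (c : ι → 𝕜) :
    ContinuousLinearMap.pi (fun j => innerSL 𝕜 (g j)) (∑ k, c k • g k) =
      (Matrix.gram 𝕜 g).mulVec c := by
  ext j
  simp [Matrix.mulVec, dotProduct, mul_comm]

theorem surjective_pi_innerSL_of_linearIndependent {𝕜 E ι : Type*} [RCLike 𝕜]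
    [NormedAddCommGroup E] [InnerProductSpace 𝕜 E] [Fintype ι] [DecidableEq ι] {g : ι → E}
    (hg : LinearIndependent 𝕜 g) :
    Surjective (ContinuousLinearMap.pi fun j => innerSL 𝕜 (g j)) := by
  have hgram : Surjective (Matrix.gram 𝕜 g).mulVec :=
    Matrix.mulVec_surjective_iff_isUnit.2 (Matrix.posDef_gram_of_linearIndependent hg).isUnit
  refine Surjective.of_comp (g := fun c : ι → 𝕜 => ∑ k, c k • g k) ?_
  simpa only [comp_def, pi_innerSL_sum_smul_eq_gram_mulVec] using hgram

theorem Submodule.span_image_eq_top_of_dense_span {𝕜 E F : Type*} [NontriviallyNormedField 𝕜]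
    [CompleteSpace 𝕜] [AddCommMonoid E] [Module 𝕜 E] [TopologicalSpace E]
    [AddCommGroup F] [Module 𝕜 F] [TopologicalSpace F] [T2Space F] [IsTopologicalAddGroup F]
    [ContinuousSMul 𝕜 F] [FiniteDimensional 𝕜 F]
    (T : E →L[𝕜] F) (hT : DenseRange T) {S : Set E} (hS : Dense (span 𝕜 S : Set E)) :
    span 𝕜 (T '' S) = ⊤ := by
  have hdense : Dense (span 𝕜 (T '' S) : Set F) := by
    have := hT.dense_image T.continuous hS
    rwa [← ContinuousLinearMap.coe_coe, ← map_coe, map_span] at this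
  rw [← SetLike.coe_set_eq, top_coe, ← hdense.closure_eq,
    (closed_of_finiteDimensional _).closure_eq]

theorem exists_linearIndependent_fin_of_span_eq_top {K M : Type*} [DivisionRing K]
    [AddCommGroup M] [Module K M] [FiniteDimensional K M] {s : Set M} (hs : span K s = ⊤)
    {n : ℕ} (hn : finrank K M = n) :
    ∃ v : Fin n → M, (∀ i, v i ∈ s) ∧ LinearIndependent K v := by
  obtain ⟨v, hvs, -, hv⟩ := exists_fun_fin_finrank_span_eq K s
  let e : Fin (finrank K (span K s)) ≃ Fin n := finCongr (by rw [hs, finrank_top, hn])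
  exact ⟨v ∘ e.symm, fun i => hvs _, hv.comp _ e.symm.injective⟩

/-- In a real Hilbert space, given linearly independent `g_1, …, g_d` and a subset
`S` with dense linear span, one can choose `f_1, …, f_d ∈ S` so that the Gram-type matrix
`⟨f_i, g_j⟩` is invertible. -/
theorem exists_invertible_pairing_matrix {H : Type*} [NormedAddCommGroup H]
    [InnerProductSpace ℝ H] {d : ℕ} (g : Fin d → H) (hg : LinearIndependent ℝ g)
    (S : Set H) (hS : Dense ((Submodule.span ℝ S : Submodule ℝ H) : Set H)) :
    ∃ f : Fin d → H, (∀ i, f i ∈ S) ∧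
      IsUnit (Matrix.of fun i j => (inner ℝ (f i) (g j) : ℝ) : Matrix (Fin d) (Fin d) ℝ) := by
  set Φ := ContinuousLinearMap.pi fun j => innerSL ℝ (g j)
  have hspan : span ℝ (Φ '' S) = ⊤ := span_image_eq_top_of_dense_span Φ
    (surjective_pi_innerSL_of_linearIndependent hg).denseRange hS
  obtain ⟨v, hvS, hv⟩ := exists_linearIndependent_fin_of_span_eq_top hspan (finrank_fin_fun ℝ)
  choose f hfS hfv using hvS
  have hrows : (Matrix.of fun i j => (inner ℝ (f i) (g j) : ℝ)).row = v := by
    ext i j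
    simp [← hfv, Φ, real_inner_comm]
  exact ⟨f, hfS, Matrix.linearIndependent_rows_iff_isUnit.1 (hrows ▸ hv)⟩
end

section
/- Let (X, μ) be a probability space, Θ = ℝ^d, and θ₀ ∈ Θ. Let Ψ : ℝ^d → ℝ^m be Fréchet differentiable at θ₀, let p : ℝ^d → L²(μ) be Fréchet differentiable at θ₀ with derivative D : ℝ^d →L L²(μ), and assume ker(DΨ(θ₀)) ⊆ ker(D). Then for every curve γ : ℝ → ℝ^d differentiable at 0 with γ(0) = θ₀, if Ψ(γ(t)) − Ψ(θ₀) = o(t) as t → 0, then ‖p(γ(t)) − p(θ₀)‖_{L²(μ)} = o(t) as t → 0. -/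
open MeasureTheory Filter Asymptotics Topology


/-- If `t • c = o(t)` near `0`, then `c = 0`. -/
lemma smul_isLittleO_eq_zero {E : Type*} [NormedAddCommGroup E] [NormedSpace ℝ E]
    {c : E} (h : (fun t : ℝ => t • c) =o[𝓝 0] fun t : ℝ => t) : c = 0 := by
  by_contra hc
  have hpos : 0 < ‖c‖ / 2 := half_pos (norm_pos_iff.mpr hc)
  have h2 := h.def hpos
  have h3 : ∀ᶠ t : ℝ in 𝓝 0, t ≠ 0 → False := by
    filter_upwards [h2] with t ht htne
    have : ‖t • c‖ = |t| * ‖c‖ := by rw [norm_smul, Real.norm_eq_abs]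
    rw [this, Real.norm_eq_abs] at ht
    have habs : 0 < |t| := abs_pos.mpr htne
    nlinarith [norm_pos_iff.mpr hc]
  obtain ⟨ε, hε, hball⟩ := Metric.eventually_nhds_iff.mp h3
  refine hball (y := ε/2) ?_ (by positivity)
  rw [Real.dist_eq, sub_zero, abs_of_pos (half_pos hε)]
  linarith

/-- Kernel condition implies curve-based first-order completeness. If the Fréchet
derivative of the observable chart `Ψ` at `θ₀` has kernel contained in that of the density map
`p : ℝ^d → L²(μ)`, then along any curve `γ` differentiable at `0` with `γ(0) = θ₀`,
`Ψ(γ(t)) − Ψ(θ₀) = o(t)` implies `‖p(γ(t)) − p(θ₀)‖ = o(t)`. -/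
theorem firstOrderComplete_of_ker_subset {X : Type*} [MeasurableSpace X] (μ : Measure X)
    [IsProbabilityMeasure μ] {d m : ℕ} (θ₀ : EuclideanSpace ℝ (Fin d))
    (Ψ : EuclideanSpace ℝ (Fin d) → EuclideanSpace ℝ (Fin m))
    (DΨ : EuclideanSpace ℝ (Fin d) →L[ℝ] EuclideanSpace ℝ (Fin m))
    (hΨ : HasFDerivAt Ψ DΨ θ₀)
    (p : EuclideanSpace ℝ (Fin d) → Lp ℝ 2 μ)
    (D : EuclideanSpace ℝ (Fin d) →L[ℝ] Lp ℝ 2 μ)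
    (hp : HasFDerivAt p D θ₀)
    (hker : ∀ v : EuclideanSpace ℝ (Fin d), DΨ v = 0 → D v = 0)
    (γ : ℝ → EuclideanSpace ℝ (Fin d)) (hγ : DifferentiableAt ℝ γ 0) (hγ0 : γ 0 = θ₀)
    (hObs : (fun t => Ψ (γ t) - Ψ θ₀) =o[𝓝 0] fun t : ℝ => t) :
    (fun t => ‖p (γ t) - p θ₀‖) =o[𝓝 0] fun t : ℝ => t := by
  set F := fderiv ℝ γ 0 with hF
  have hγd : HasFDerivAt γ F 0 := hγ.hasFDerivAt
  set v := F 1 with hv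
  have hFt : ∀ t : ℝ, F t = t • v := fun t => by
    rw [hv, ← F.map_smul, smul_eq_mul, mul_one]
  -- derivative of Ψ ∘ γ at 0
  have hγ0' : γ 0 = θ₀ := hγ0
  have hΨγ : HasFDerivAt (fun t => Ψ (γ t)) (DΨ.comp F) 0 :=
    (hγ0 ▸ hΨ).comp 0 hγd
  have h1 : (fun t : ℝ => Ψ (γ t) - Ψ (γ 0) - (DΨ.comp F) (t - 0)) =o[𝓝 0]
      fun t : ℝ => t - 0 := hΨγ.isLittleO
  simp only [sub_zero, hγ0] at h1
  have h2 : (fun t : ℝ => (DΨ.comp F) t) =o[𝓝 0] fun t : ℝ => t := by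
    have := hObs.sub h1
    simpa using this
  have h3 : (fun t : ℝ => t • DΨ v) =o[𝓝 0] fun t : ℝ => t := by
    refine h2.congr' (Eventually.of_forall fun t => ?_) (Eventually.of_forall fun _ => rfl)
    simp [hFt t]
  have hDΨv : DΨ v = 0 := smul_isLittleO_eq_zero h3
  have hDv : D v = 0 := hker v hDΨv
  -- derivative of p ∘ γ at 0
  have hpγ : HasFDerivAt (fun t => p (γ t)) (D.comp F) 0 :=
    (hγ0 ▸ hp).comp 0 hγd
  have h4 : (fun t : ℝ => p (γ t) - p (γ 0) - (D.comp F) (t - 0)) =o[𝓝 0]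
      fun t : ℝ => t - 0 := hpγ.isLittleO
  simp only [sub_zero, hγ0] at h4
  have h5 : (fun t : ℝ => p (γ t) - p θ₀) =o[𝓝 0] fun t : ℝ => t := by
    refine h4.congr' (Eventually.of_forall fun t => ?_) (Eventually.of_forall fun _ => rfl)
    simp [hFt t, hDv]
  simpa using h5.norm_left
end

section
/- For real numbers μ, δ, α, σ with σ > 0 and |α| ≤ 1/2, let m = μ + 2αδ be the mean of the Gaussian mixture P_{μ,δ,α}. Then the third central moment satisfies ∫ (x − m)³ dP_{μ,δ,α}(x) = −4αδ³(1 − 4α²). -/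
open MeasureTheory ProbabilityTheory Real NNReal

section aux

lemma aux_integrable_pow_mul_exp {b : ℝ} (hb : 0 < b) (k : ℕ) :
    Integrable (fun x : ℝ => x ^ k * Real.exp (-b * x ^ 2)) := by
  have := integrable_rpow_mul_exp_neg_mul_sq hb (s := k)
    (neg_one_lt_zero.trans_le (Nat.cast_nonneg k))
  simpa [Real.rpow_natCast] using this

variable {v : ℝ≥0}

lemma aux_integral_gaussianReal (hv : v ≠ 0) (μ' : ℝ) (g : ℝ → ℝ) :
    ∫ x, g x ∂(gaussianReal μ' v) = ∫ x, gaussianPDFReal μ' v x * g x := by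
  rw [gaussianReal_of_var_ne_zero _ hv]
  have h : gaussianPDF μ' v = fun x => ((gaussianPDFReal μ' v x).toNNReal : ENNReal) := by
    ext x; rw [gaussianPDF]; rfl
  rw [h, integral_withDensity_eq_integral_smul
    ((measurable_gaussianPDFReal μ' v).real_toNNReal) g]
  congr 1; ext x
  simp [NNReal.smul_def, Real.coe_toNNReal _ (gaussianPDFReal_nonneg μ' v x)]

lemma aux_integrable_gaussianReal (hv : v ≠ 0) (μ' : ℝ) (g : ℝ → ℝ)
    (hg : Integrable (fun x => gaussianPDFReal μ' v x * g x)) :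
    Integrable g (gaussianReal μ' v) := by
  rw [gaussianReal_of_var_ne_zero _ hv]
  have h : gaussianPDF μ' v = fun x => ((gaussianPDFReal μ' v x).toNNReal : ENNReal) := by
    ext x; rw [gaussianPDF]; rfl
  rw [h, integrable_withDensity_iff_integrable_smul
    ((measurable_gaussianPDFReal μ' v).real_toNNReal)]
  refine hg.congr (Filter.Eventually.of_forall fun x => ?_)
  simp [NNReal.smul_def, Real.coe_toNNReal _ (gaussianPDFReal_nonneg μ' v x)]

lemma aux_pdf_eq (hv : v ≠ 0) (x : ℝ) :
    gaussianPDFReal 0 v x = (√(2 * π * v))⁻¹ * Real.exp (-(2 * (v : ℝ))⁻¹ * x ^ 2) := by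
  have harg : -x ^ 2 / (2 * (v : ℝ)) = -(2 * (v : ℝ))⁻¹ * x ^ 2 := by ring
  rw [gaussianPDFReal, sub_zero, harg]

lemma aux_intk (hv : v ≠ 0) (k : ℕ) :
    Integrable (fun x : ℝ => gaussianPDFReal 0 v x * x ^ k) := by
  have hvpos : (0 : ℝ) < v := NNReal.coe_pos.mpr (zero_lt_iff.mpr hv)
  have hb : (0 : ℝ) < (2 * (v : ℝ))⁻¹ := by positivity
  have := (aux_integrable_pow_mul_exp hb k).const_mul (√(2 * π * v))⁻¹
  refine this.congr (Filter.Eventually.of_forall fun x => ?_)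
  simp only [aux_pdf_eq hv]
  ring

lemma aux_odd_moment (hv : v ≠ 0) (k : ℕ) (hk : Odd k) :
    ∫ x, gaussianPDFReal 0 v x * x ^ k = 0 := by
  have hneg : (fun x : ℝ => gaussianPDFReal 0 v x * x ^ k) ∘ (fun x => -x)
      = fun x => -(gaussianPDFReal 0 v x * x ^ k) := by
    ext x
    simp only [Function.comp_apply]
    rw [aux_pdf_eq hv (-x), aux_pdf_eq hv x, hk.neg_pow, neg_sq]
    ring
  have h := integral_neg_eq_self (fun x : ℝ => gaussianPDFReal 0 v x * x ^ k) volume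
  rw [show (fun x : ℝ => gaussianPDFReal 0 v (-x) * (-x) ^ k)
      = fun x => -(gaussianPDFReal 0 v x * x ^ k) from hneg] at h
  rw [integral_neg] at h
  linarith

/-- Third moment of a gaussian component about a point `m`. -/
lemma aux_component (hv : v ≠ 0) (a m : ℝ) :
    ∫ x, (x - m) ^ 3 ∂(gaussianReal a v)
      = 3 * (a - m) * (∫ x, gaussianPDFReal 0 v x * x ^ 2) + (a - m) ^ 3 := by
  set I2 := ∫ x, gaussianPDFReal 0 v x * x ^ 2 with hI2
  rw [aux_integral_gaussianReal hv]
  have hshift := integral_add_right_eq_self (μ := volume)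
    (fun x : ℝ => gaussianPDFReal a v x * (x - m) ^ 3) a
  rw [← hshift]
  have hpdfshift : ∀ y : ℝ, gaussianPDFReal a v (y + a) = gaussianPDFReal 0 v y := by
    intro y; rw [gaussianPDFReal, gaussianPDFReal, add_sub_cancel_right, sub_zero]
  simp_rw [hpdfshift]
  set c := a - m with hc
  have expand : (fun y : ℝ => gaussianPDFReal 0 v y * (y + a - m) ^ 3)
      = fun y => (gaussianPDFReal 0 v y * y ^ 3 + (3 * c) * (gaussianPDFReal 0 v y * y ^ 2))
        + ((3 * c ^ 2) * (gaussianPDFReal 0 v y * y ^ 1) + c ^ 3 * gaussianPDFReal 0 v y) := by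
    ext y; rw [hc]; ring
  rw [expand]
  have h3 := aux_intk hv 3
  have h2 := (aux_intk hv 2).const_mul (3 * c)
  have h1 := (aux_intk hv 1).const_mul (3 * c ^ 2)
  have h0 := (integrable_gaussianPDFReal 0 v).const_mul (c ^ 3)
  have h12 : Integrable (fun y : ℝ => gaussianPDFReal 0 v y * y ^ 3
      + 3 * c * (gaussianPDFReal 0 v y * y ^ 2)) := h3.add h2
  have h34 : Integrable (fun y : ℝ => 3 * c ^ 2 * (gaussianPDFReal 0 v y * y ^ 1)
      + c ^ 3 * gaussianPDFReal 0 v y) := h1.add h0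
  rw [integral_add h12 h34,
    integral_add h3 h2, integral_add h1 h0,
    integral_const_mul, integral_const_mul, integral_const_mul,
    aux_odd_moment hv 3 ⟨1, by norm_num⟩, aux_odd_moment hv 1 odd_one,
    integral_gaussianPDFReal_eq_one 0 hv]
  ring

end aux


/-- The third central moment of the two-component Gaussian mixture
`P = (1/2 + α)·N(μ+δ, σ²) + (1/2 − α)·N(μ−δ, σ²)`, centered at the mean `m = μ + 2αδ`,
equals `−4αδ³(1 − 4α²)`. -/
theorem gaussianMixture_thirdCentralMoment (μ δ α σ : ℝ) (hσ : 0 < σ) (hα : |α| ≤ 1 / 2)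
    (P : Measure ℝ)
    (hP : P = ENNReal.ofReal (1 / 2 + α) • gaussianReal (μ + δ) ((σ ^ 2).toNNReal)
        + ENNReal.ofReal (1 / 2 - α) • gaussianReal (μ - δ) ((σ ^ 2).toNNReal))
    (m : ℝ) (hm : m = μ + 2 * α * δ) :
    ∫ x, (x - m) ^ 3 ∂P = -4 * α * δ ^ 3 * (1 - 4 * α ^ 2) := by
  obtain ⟨hα1, hα2⟩ := abs_le.mp hα
  set v : ℝ≥0 := (σ ^ 2).toNNReal with hv_def
  have hv : v ≠ 0 := by
    simp only [hv_def, ne_eq, Real.toNNReal_eq_zero, not_le]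
    positivity
  have hint : ∀ a : ℝ, Integrable (fun x => (x - m) ^ 3) (gaussianReal a v) := by
    intro a
    refine aux_integrable_gaussianReal hv a _ ?_
    have hpdfshift : ∀ y : ℝ, gaussianPDFReal a v (y + a) = gaussianPDFReal 0 v y := by
      intro y; rw [gaussianPDFReal, gaussianPDFReal, add_sub_cancel_right, sub_zero]
    have : Integrable (fun y : ℝ => gaussianPDFReal a v (y + a) * (y + a - m) ^ 3) := by
      simp_rw [hpdfshift]
      have expand : (fun y : ℝ => gaussianPDFReal 0 v y * (y + a - m) ^ 3)
          = fun y => (gaussianPDFReal 0 v y * y ^ 3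
              + (3 * (a - m)) * (gaussianPDFReal 0 v y * y ^ 2))
            + ((3 * (a - m) ^ 2) * (gaussianPDFReal 0 v y * y ^ 1)
              + (a - m) ^ 3 * gaussianPDFReal 0 v y) := by
        ext y; ring
      rw [expand]
      exact (((aux_intk hv 3).add ((aux_intk hv 2).const_mul _)).add
        (((aux_intk hv 1).const_mul _).add ((integrable_gaussianPDFReal 0 v).const_mul _)))
    have := this.comp_sub_right a
    simpa using this
  have hw1 : (ENNReal.ofReal (1 / 2 + α)) ≠ ⊤ := ENNReal.ofReal_ne_top
  have hw2 : (ENNReal.ofReal (1 / 2 - α)) ≠ ⊤ := ENNReal.ofReal_ne_top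
  rw [hP, integral_add_measure
      ((hint (μ + δ)).smul_measure hw1) ((hint (μ - δ)).smul_measure hw2),
    integral_smul_measure, integral_smul_measure,
    aux_component hv, aux_component hv,
    ENNReal.toReal_ofReal (by linarith), ENNReal.toReal_ofReal (by linarith)]
  rw [hm]
  simp only [smul_eq_mul]
  ring
end
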